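/- For every integer k ≥ 0, the sum of the entries of the vector ρ_k equals β_{k+1}²/(2(1+√2)) + (1+√2)^{k-2}. -/

import Mathlib

/-- β_i = 1 + (1+√2)^{i-1} (real exponent). -/
noncomputable def beta (i : ℕ) : ℝ := 1 + (1 + Real.sqrt 2) ^ ((i : ℝ) - 1)

/-- π^(ℓ) ∈ ℝ^{2^ℓ - 1}, with i-th entry β_{ν(i)} (ν the 2-adic valuation). -/
noncomputable def piList (ℓ : ℕ) : List ℝ :=
  (List.range (2 ^ ℓ - 1)).map fun i => beta (padicValNat 2 (i + 1))

/-- σ^(1) = ∅ and σ^(k) = (1/2)(1+√2)^{-2(k-1)} [π^(k-2), β_k, 2(1+√2)^{2(k-1)} σ^(k-1)]. -/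
noncomputable def sigma : ℕ → List ℝ
  | 0 => []
  | 1 => []
  | (k + 2) =>
      ((piList k ++ [beta (k + 2)]
          ++ (sigma (k + 1)).map fun x => 2 * (1 + Real.sqrt 2) ^ (2 * (k + 1)) * x).map
        fun x => (1 / 2) / (1 + Real.sqrt 2) ^ (2 * (k + 1)) * x)

/-- ρ_0 = [0,1] and
ρ_k = [(1+√2)^{k-2}, (1+√2)^{2k-1}σ^(k) - π^(k-1)/(2(1+√2)), 0, π^(k), 1] for k ≥ 1. -/
noncomputable def rho : ℕ → List ℝ
  | 0 => [0, 1]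
  | (k + 1) =>
      [(1 + Real.sqrt 2) ^ (((k : ℝ) + 1) - 2)]
        ++ List.zipWith
            (fun s p => (1 + Real.sqrt 2) ^ (2 * (k + 1) - 1) * s - p / (2 * (1 + Real.sqrt 2)))
            (sigma (k + 1)) (piList k)
        ++ [0] ++ piList (k + 1) ++ [1]

-- auxiliary
lemma sqrt2_sq : Real.sqrt 2 ^ 2 = 2 := Real.sq_sqrt (by norm_num)

lemma r_pos : (0:ℝ) < 1 + Real.sqrt 2 := by positivity

lemma r_sq : (1 + Real.sqrt 2) ^ 2 = 2 * (1 + Real.sqrt 2) + 1 := by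
  nlinarith [sqrt2_sq]

lemma beta_succ (i : ℕ) : beta (i + 1) = 1 + (1 + Real.sqrt 2) ^ i := by
  unfold beta
  rw [show ((i + 1 : ℕ) : ℝ) - 1 = ((i : ℕ) : ℝ) by push_cast; ring, Real.rpow_natCast]

lemma beta_zero : beta 0 = Real.sqrt 2 := by
  unfold beta
  rw [show ((0 : ℕ) : ℝ) - 1 = -1 by norm_num]
  rw [Real.rpow_neg_one]
  have h : (1 + Real.sqrt 2) * (Real.sqrt 2 - 1) = 1 := by nlinarith [sqrt2_sq]
  field_simp
  nlinarith [sqrt2_sq, Real.sqrt_nonneg 2]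

lemma aux1 (r X : ℝ) (hr0 : r ≠ 0) (hX0 : X ≠ 0) (hr2 : r ^ 2 = 2 * r + 1) :
    (1/2)/(X^2*r^2) * (X - 1) + ((1/2)/(X^2*r^2) * (1 + X*r)
      + (1/2)/(X^2*r^2) * (2 * (X^2*r^2) * (1/2 * (1 - 1/X))))
    = 1/2 * (1 - 1/(X*r)) := by
  field_simp
  linear_combination (-X) * hr2

lemma aux2 (r X : ℝ) (hr0 : r ≠ 0) (hX0 : X ≠ 0) (hr2 : r ^ 2 = 2 * r + 1) :
    r * X^2 * (1/2 * (1 - 1/X)) - (X - 1)/(2*r) + 0 + (X*r - 1) + 1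
    = (1 + X*r)^2 / (2*r) := by
  field_simp
  linear_combination X * hr2

lemma val_add_pow (ℓ m : ℕ) (h0 : 0 < m) (h : m < 2^ℓ) :
    padicValNat 2 (2^ℓ + m) = padicValNat 2 m := by
  haveI : Fact (Nat.Prime 2) := ⟨Nat.prime_two⟩
  have hv : padicValNat 2 m < ℓ := by
    by_contra hle
    push_neg at hle
    have h1 := pow_padicValNat_dvd (p := 2) (n := m)
    have h2 : 2 ^ ℓ ∣ m := dvd_trans (pow_dvd_pow 2 hle) h1
    exact absurd (Nat.le_of_dvd h0 h2) (not_le.mpr h)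
  have key : padicValRat 2 ((m : ℚ) + ((2^ℓ : ℕ) : ℚ)) = padicValRat 2 (m : ℚ) := by
    apply padicValRat.add_eq_of_lt (p := 2)
    · positivity
    · exact_mod_cast h0.ne'
    · positivity
    · rw [padicValRat.of_nat, padicValRat.of_nat, padicValNat.prime_pow]
      exact_mod_cast hv
  have hc : ((2^ℓ + m : ℕ) : ℚ) = (m : ℚ) + ((2^ℓ : ℕ) : ℚ) := by push_cast; ring
  rw [← hc, padicValRat.of_nat, padicValRat.of_nat] at key
  exact_mod_cast key

lemma list_range_sum (n : ℕ) (f : ℕ → ℝ) :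
    ((List.range n).map f).sum = ∑ i ∈ Finset.range n, f i := by
  induction n with
  | zero => simp
  | succ n ih => rw [List.range_succ, Finset.sum_range_succ, List.map_append,
      List.sum_append, ih]; simp

lemma piList_sum (ℓ : ℕ) : (piList ℓ).sum = (1 + Real.sqrt 2) ^ ℓ - 1 := by
  induction ℓ with
  | zero => simp [piList]
  | succ ℓ ih =>
    have h2 : (1:ℕ) ≤ 2 ^ ℓ := Nat.one_le_two_pow
    unfold piList at *
    rw [list_range_sum] at *
    have h1 : 2 ^ (ℓ + 1) - 1 = 2 ^ ℓ + (2 ^ ℓ - 1) := by omega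
    rw [h1, Finset.sum_range_add]
    have h3 : 2 ^ ℓ = (2 ^ ℓ - 1) + 1 := by omega
    rw [h3, Finset.sum_range_succ, Nat.add_sub_cancel]
    have hmid : padicValNat 2 (2 ^ ℓ - 1 + 1) = ℓ := by
      rw [show 2 ^ ℓ - 1 + 1 = 2 ^ ℓ by omega]
      haveI : Fact (Nat.Prime 2) := ⟨Nat.prime_two⟩
      exact padicValNat.prime_pow ℓ
    have hshift : ∀ j ∈ Finset.range (2 ^ ℓ - 1),
        beta (padicValNat 2 (2 ^ ℓ - 1 + 1 + j + 1)) = beta (padicValNat 2 (j + 1)) := by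
      intro j hj
      rw [Finset.mem_range] at hj
      rw [show 2 ^ ℓ - 1 + 1 + j + 1 = 2 ^ ℓ + (j + 1) by omega,
        val_add_pow ℓ (j + 1) (Nat.succ_pos j) (by omega)]
    rw [Finset.sum_congr rfl hshift, ih, hmid]
    unfold beta
    have e1 : (1 + Real.sqrt 2) ^ (ℓ : ℕ)
        = (1 + Real.sqrt 2) ^ (((ℓ:ℕ):ℝ) - 1) * (1 + Real.sqrt 2) := by
      rw [← Real.rpow_natCast (1 + Real.sqrt 2) ℓ,
        show ((ℓ:ℕ):ℝ) = (((ℓ:ℕ):ℝ) - 1) + 1 by ring,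
        Real.rpow_add r_pos, Real.rpow_one]
      ring_nf
    have e2 : (1 + Real.sqrt 2) ^ (ℓ + 1 : ℕ)
        = (1 + Real.sqrt 2) ^ (((ℓ:ℕ):ℝ) - 1) * (1 + Real.sqrt 2) ^ (2 : ℕ) := by
      rw [← Real.rpow_natCast (1 + Real.sqrt 2) (ℓ + 1),
        show (((ℓ+1:ℕ)):ℝ) = (((ℓ:ℕ):ℝ) - 1) + 2 by push_cast; ring,
        Real.rpow_add r_pos, show ((2:ℝ)) = ((2:ℕ):ℝ) by norm_num, Real.rpow_natCast]
    rw [e1, e2]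
    linear_combination ((1 + Real.sqrt 2) ^ (((ℓ:ℕ):ℝ) - 1)) * r_sq
      - (2 * (1 + Real.sqrt 2) ^ (((ℓ:ℕ):ℝ) - 1)) * sqrt2_sq

lemma sigma_len (k : ℕ) : (sigma (k + 1)).length = 2 ^ k - 1 := by
  induction k with
  | zero => simp [sigma]
  | succ k ih =>
    have h2 : (1:ℕ) ≤ 2 ^ k := Nat.one_le_two_pow
    rw [sigma]
    simp [piList, ih]
    omega

lemma sum_map_mul (c : ℝ) (l : List ℝ) : (l.map fun x => c * x).sum = c * l.sum := by
  induction l with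
  | nil => simp
  | cons a l ih => simp [ih]; ring

lemma sigma_sum (k : ℕ) :
    (sigma (k + 1)).sum = 1 / 2 * (1 - 1 / (1 + Real.sqrt 2) ^ k) := by
  induction k with
  | zero => simp [sigma]
  | succ k ih =>
    rw [sigma, sum_map_mul, List.sum_append, List.sum_append, sum_map_mul, ih,
      piList_sum, beta_succ]
    have hr := r_pos
    have hrk : (0:ℝ) < (1 + Real.sqrt 2) ^ k := pow_pos hr k
    have hr1 : (0:ℝ) < (1 + Real.sqrt 2) ^ (2 * (k + 1)) := pow_pos hr _
    have h := aux1 (1 + Real.sqrt 2) ((1 + Real.sqrt 2) ^ k) hr.ne' hrk.ne' r_sq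
    simp only [List.sum_cons, List.sum_nil, add_zero]
    linear_combination h

lemma zip_sum (a c : ℝ) : ∀ l1 l2 : List ℝ, l1.length = l2.length →
    (List.zipWith (fun s p => a * s - p / c) l1 l2).sum = a * l1.sum - l2.sum / c := by
  intro l1
  induction l1 with
  | nil => intro l2 h; simp at h ⊢; rw [List.length_eq_zero_iff.mp h.symm]; simp
  | cons x l ih =>
    intro l2 h
    cases l2 with
    | nil => simp at h
    | cons y l2 =>
      simp at h
      simp [ih l2 h]
      ring


/-- for every k ≥ 0, the sum of the entries of ρ_k equals
β_{k+1}²/(2(1+√2)) + (1+√2)^{k-2}. -/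
theorem stmt14 (k : ℕ) :
    (rho k).sum
      = (beta (k + 1)) ^ 2 / (2 * (1 + Real.sqrt 2))
        + (1 + Real.sqrt 2) ^ ((k : ℝ) - 2) := by
  have hr := r_pos
  cases k with
  | zero =>
    have hb : beta 1 = 2 := by rw [beta_succ]; norm_num
    rw [hb]
    simp only [rho, List.sum_cons, List.sum_nil]
    rw [show ((0:ℕ):ℝ) - 2 = -2 by norm_num, Real.rpow_neg hr.le,
      show (2:ℝ) = ((2:ℕ):ℝ) by norm_num, Real.rpow_natCast]
    have h2 : (0:ℝ) < (1 + Real.sqrt 2) ^ 2 := pow_pos hr 2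
    field_simp
    push_cast
    nlinarith [r_sq]
  | succ k =>
    rw [rho]
    rw [List.sum_append, List.sum_append, List.sum_append, List.sum_append]
    have hlen : (sigma (k + 1)).length = (piList k).length := by
      rw [sigma_len]; simp [piList]
    rw [zip_sum _ _ _ _ hlen, sigma_sum, piList_sum, piList_sum, beta_succ]
    simp only [List.sum_cons, List.sum_nil]
    rw [show (((k:ℕ):ℝ) + 1) - 2 = (((k+1:ℕ)):ℝ) - 2 by push_cast; ring]
    have hrk : (0:ℝ) < (1 + Real.sqrt 2) ^ k := pow_pos hr k
    have key : (1 + Real.sqrt 2) ^ (2 * (k + 1) - 1) *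
          (1 / 2 * (1 - 1 / (1 + Real.sqrt 2) ^ k))
        - ((1 + Real.sqrt 2) ^ k - 1) / (2 * (1 + Real.sqrt 2))
        + 0 + ((1 + Real.sqrt 2) ^ (k + 1) - 1) + 1
        = (1 + (1 + Real.sqrt 2) ^ (k + 1)) ^ 2 / (2 * (1 + Real.sqrt 2)) := by
      rw [show 2 * (k + 1) - 1 = k + k + 1 by omega]
      have h := aux2 (1 + Real.sqrt 2) ((1 + Real.sqrt 2) ^ k) hr.ne' hrk.ne' r_sq
      linear_combination h
    linarith [key]
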